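/- arXiv:math/0512170 — 2 statements merged into one kernel-verified Lean document; each statement's English description precedes it below -/
import Mathlib

section
/- Let Fq be a finite field, F_∞ the completion of Fq(t) at the valuation at infinity, and C an algebraically closed field equipped with a complete nonarchimedean absolute value together with an isometric embedding of F_∞ into C. For elements w_1, …, w_n of C, the following are equivalent: (i) w_1, …, w_n are linearly independent over F_∞; (ii) w_1, …, w_n are linearly independent over Fq[t] and the Fq[t]-submodule Fq[t]·w_1 + ⋯ + Fq[t]·w_n of C is a discrete subset of C (equivalently, 0 is an isolated point of this submodule). -/
open FunctionField
open scoped Multiplicative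

/-- The canonical standard absolute value on `F_∞ = RatFunc.CompletionAtInfty Fq`: the real absolute value
`|x| = q ^ v(x)` (with `q = #Fq`) corresponding to the `ℤₘ₀`-valued valuation at infinity. -/
noncomputable def fqtInftyAbs (Fq : Type*) [Field Fq] [Fintype Fq]
    [DecidableEq (RatFunc Fq)] (x : RatFunc.CompletionAtInfty Fq) : ℝ :=
  (WithZeroMulInt.toNNReal
    (by exact_mod_cast Fintype.card_ne_zero : ((Fintype.card Fq : NNReal)) ≠ 0)
    (Valued.v x) : ℝ)

/-- The canonical ring homomorphism from `Fq(t)` into its completion `F_∞ = RatFunc.CompletionAtInfty Fq`. -/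
noncomputable def ratFuncToFqtInfty (Fq : Type*) [Field Fq] [DecidableEq (RatFunc Fq)] :
    RatFunc Fq →+* RatFunc.CompletionAtInfty Fq :=
  letI := RatFunc.inftyValued Fq
  UniformSpace.Completion.coeRingHom

section Aux

set_option linter.unusedSectionVars false

variable (Fq : Type*) [Field Fq] [Fintype Fq] [DecidableEq (RatFunc Fq)]

lemma FqtAux.card_one_lt : (1 : NNReal) < (Fintype.card Fq : NNReal) := by
  exact_mod_cast Fintype.one_lt_card

/-- The canonical embedding of `Fq[t]` into `F_∞`. -/
noncomputable def polyToF : Polynomial Fq →+* RatFunc.CompletionAtInfty Fq :=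
  (ratFuncToFqtInfty Fq).comp (algebraMap (Polynomial Fq) (RatFunc Fq))

namespace FqtAux

lemma val_ratFunc (r : RatFunc Fq) :
    Valued.v (ratFuncToFqtInfty Fq r) = inftyValuationDef Fq r := by
  letI := RatFunc.inftyValued Fq
  exact Valued.valuedCompletion_apply r

lemma val_polyToF {p : Polynomial Fq} (hp : p ≠ 0) :
    Valued.v (polyToF Fq p) = (Multiplicative.ofAdd (p.natDegree : ℤ) : Multiplicative ℤ) := by
  rw [polyToF, RingHom.comp_apply, val_ratFunc]
  exact inftyValuation.polynomial Fq hp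

lemma polyToF_ne_zero {p : Polynomial Fq} (hp : p ≠ 0) : polyToF Fq p ≠ 0 := by
  intro h
  have := val_polyToF Fq hp
  rw [h, Valuation.map_zero] at this
  exact WithZero.zero_ne_coe this

lemma polyToF_inj : Function.Injective (polyToF Fq) := by
  intro p q h
  by_contra hne
  exact polyToF_ne_zero Fq (sub_ne_zero.mpr hne) (by rw [map_sub, h, sub_self])

lemma val_ratFunc' (r : RatFunc Fq) :
    Valued.v (ratFuncToFqtInfty Fq r) = inftyValuation Fq r := val_ratFunc Fq r

lemma ratFunc_decomp (r : RatFunc Fq) :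
    ∃ p : Polynomial Fq, inftyValuation Fq (r - algebraMap (Polynomial Fq) (RatFunc Fq) p) < 1 := by
  refine ⟨r.num / r.denom, ?_⟩
  have hd : r.denom ≠ 0 := r.denom_ne_zero
  have hd' : algebraMap (Polynomial Fq) (RatFunc Fq) r.denom ≠ 0 := RatFunc.algebraMap_ne_zero hd
  set s : Polynomial Fq := r.num % r.denom with hs
  have key : r - algebraMap (Polynomial Fq) (RatFunc Fq) (r.num / r.denom)
      = algebraMap (Polynomial Fq) (RatFunc Fq) s / algebraMap (Polynomial Fq) (RatFunc Fq) r.denom := by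
    rw [eq_div_iff hd', sub_mul]
    have h1 : r * algebraMap (Polynomial Fq) (RatFunc Fq) r.denom
        = algebraMap (Polynomial Fq) (RatFunc Fq) r.num := by
      nth_rewrite 1 [← RatFunc.num_div_denom r]
      rw [div_mul_cancel₀ _ hd']
    rw [h1, ← map_mul, ← map_sub]
    congr 1
    rw [hs, EuclideanDomain.mod_eq_sub_mul_div, mul_comm]
  rw [key]
  by_cases hs0 : s = 0
  · rw [hs0, map_zero, zero_div, map_zero]
    exact zero_lt_one
  · rw [map_div₀]
    have h2 : inftyValuation Fq (algebraMap (Polynomial Fq) (RatFunc Fq) s)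
        = (Multiplicative.ofAdd (s.natDegree : ℤ) : Multiplicative ℤ) :=
      inftyValuation.polynomial Fq hs0
    have h3 : inftyValuation Fq (algebraMap (Polynomial Fq) (RatFunc Fq) r.denom)
        = (Multiplicative.ofAdd (r.denom.natDegree : ℤ) : Multiplicative ℤ) :=
      inftyValuation.polynomial Fq hd
    rw [h2, h3, ← WithZero.coe_div, ← WithZero.coe_one, WithZero.coe_lt_coe,
      ← ofAdd_sub, ← ofAdd_zero, Multiplicative.ofAdd_lt, sub_neg]
    exact_mod_cast Polynomial.natDegree_lt_natDegree hs0 (EuclideanDomain.mod_lt _ hd)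

/-- Every element of `F_∞` is a polynomial plus an element of valuation `< 1`. -/
lemma decompF (x : RatFunc.CompletionAtInfty Fq) :
    ∃ p : Polynomial Fq, Valued.v (x - polyToF Fq p) < 1 := by
  letI := RatFunc.inftyValued Fq
  have hd : DenseRange (fun r : RatFunc Fq => ratFuncToFqtInfty Fq r) :=
    UniformSpace.Completion.denseRange_coe
  have hnb : {y : RatFunc.CompletionAtInfty Fq | Valued.v (y - x) < ((1 : (WithZero (Multiplicative ℤ))ˣ) : WithZero (Multiplicative ℤ))} ∈ nhds x :=
    Valued.mem_nhds.mpr ⟨1, fun y hy => by simpa using hy⟩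
  obtain ⟨r, hy1⟩ := hd.mem_nhds hnb
  obtain ⟨p, hp⟩ := ratFunc_decomp Fq r
  refine ⟨p, ?_⟩
  have hxy : x - polyToF Fq p = -(ratFuncToFqtInfty Fq r - x) + (ratFuncToFqtInfty Fq (r - algebraMap (Polynomial Fq) (RatFunc Fq) p)) := by
    have : ratFuncToFqtInfty Fq (r - algebraMap (Polynomial Fq) (RatFunc Fq) p)
        = ratFuncToFqtInfty Fq r - polyToF Fq p := by
      rw [map_sub]; rfl
    rw [this]; ring
  rw [hxy]
  refine Valuation.map_add_lt _ ?_ ?_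
  · rw [Valuation.map_neg]
    simpa using hy1
  · rw [val_ratFunc' Fq]
    exact hp

/-- The rank-one structure on the valuation of `F_∞`. -/
noncomputable instance rankOneFqtInfty :
    Valuation.RankOne (Valued.v : Valuation (RatFunc.CompletionAtInfty Fq) (WithZero (Multiplicative ℤ))) where
  hom' := (WithZeroMulInt.toNNReal (ne_zero_of_lt (card_one_lt Fq))).comp
    MonoidWithZeroHom.ValueGroup₀.embedding
  strictMono' := (WithZeroMulInt.toNNReal_strictMono (card_one_lt Fq)).comp
    MonoidWithZeroHom.ValueGroup₀.embedding_strictMono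
  exists_val_nontrivial := by
    refine ⟨ratFuncToFqtInfty Fq RatFunc.X, ?_, ?_⟩ <;>
      rw [val_ratFunc, show inftyValuationDef Fq RatFunc.X = RatFunc.inftyValuation Fq RatFunc.X from rfl,
        inftyValuation.X]
    · exact WithZero.coe_ne_zero
    · simp

/-- The normed field structure on `F_∞` induced by the valuation at infinity. -/
noncomputable def nnfF : NontriviallyNormedField (RatFunc.CompletionAtInfty Fq) :=
  Valued.toNontriviallyNormedField _ (WithZero (Multiplicative ℤ))

lemma completeF :
    letI := nnfF Fq
    CompleteSpace (RatFunc.CompletionAtInfty Fq) := by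
  letI := nnfF Fq
  show @CompleteSpace _ ((inferInstance : Valued (RatFunc.CompletionAtInfty Fq) (WithZero (Multiplicative ℤ))).toUniformSpace)
  exact @UniformSpace.Completion.completeSpace (RatFunc Fq) (RatFunc.inftyValued Fq).toUniformSpace

lemma norm_eq_abs (x : RatFunc.CompletionAtInfty Fq) :
    letI := nnfF Fq
    ‖x‖ = fqtInftyAbs Fq x := by
  letI := nnfF Fq
  show ((WithZeroMulInt.toNNReal (ne_zero_of_lt (card_one_lt Fq)) (MonoidWithZeroHom.ValueGroup₀.embedding
    (Valued.v.restrict x)) : NNReal) : ℝ) = _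
  rw [Valuation.embedding_restrict]
  rfl

lemma abs_nonneg' (x : RatFunc.CompletionAtInfty Fq) : 0 ≤ fqtInftyAbs Fq x := NNReal.coe_nonneg _

lemma abs_lt_of_val_lt {y : RatFunc.CompletionAtInfty Fq} {m : ℤ}
    (h : Valued.v y < (Multiplicative.ofAdd m : Multiplicative ℤ)) :
    fqtInftyAbs Fq y < (Fintype.card Fq : ℝ) ^ m := by
  have hlt := WithZeroMulInt.toNNReal_strictMono (card_one_lt Fq) h
  have heq : WithZeroMulInt.toNNReal (ne_zero_of_lt (card_one_lt Fq))
      ((Multiplicative.ofAdd m : Multiplicative ℤ) : WithZero (Multiplicative ℤ))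
      = (Fintype.card Fq : NNReal) ^ m := by
    rw [WithZeroMulInt.toNNReal_neg_apply _ (WithZero.coe_ne_zero), WithZero.unzero_coe,
      toAdd_ofAdd]
  rw [heq] at hlt
  have := NNReal.coe_lt_coe.mpr hlt
  rwa [NNReal.coe_zpow] at this

lemma one_le_abs_polyToF {p : Polynomial Fq} (hp : p ≠ 0) :
    1 ≤ fqtInftyAbs Fq (polyToF Fq p) := by
  have h1 : (1 : WithZero (Multiplicative ℤ)) ≤ Valued.v (polyToF Fq p) := by
    rw [val_polyToF Fq hp, ← WithZero.coe_one, WithZero.coe_le_coe, ← ofAdd_zero,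
      Multiplicative.ofAdd_le]
    exact_mod_cast Nat.zero_le _
  have := (WithZeroMulInt.toNNReal_strictMono (card_one_lt Fq)).monotone h1
  rw [map_one] at this
  exact_mod_cast this

lemma finite_degLT (N : ℕ) : Finite {p : Polynomial Fq // p.degree < (N : ℕ)} := by
  classical
  have hinj : Function.Injective
      (fun p : {p : Polynomial Fq // p.degree < (N : ℕ)} => fun i : Fin N => p.1.coeff i) := by
    intro p q h
    ext1
    ext i
    by_cases hi : i < N
    · exact congrFun h ⟨i, hi⟩
    · push_neg at hi
      rw [Polynomial.coeff_eq_zero_of_degree_lt (lt_of_lt_of_le p.2 (by exact_mod_cast hi)),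
        Polynomial.coeff_eq_zero_of_degree_lt (lt_of_lt_of_le q.2 (by exact_mod_cast hi))]
  exact Finite.of_injective _ hinj

end FqtAux

end Aux

/-- **Criterion for discreteness of finitely generated `Fq[t]`-lattices.**
Let `C` be an algebraically closed field, complete with respect to a nonarchimedean
absolute value, together with an isometric ring embedding `ι : F_∞ → C`.  For
`w₁, …, wₙ ∈ C` the following are equivalent:
(i) `w₁, …, wₙ` are linearly independent over `F_∞`;
(ii) `w₁, …, wₙ` are linearly independent over `Fq[t]` and the `Fq[t]`-submodule
`Fq[t]·w₁ + ⋯ + Fq[t]·wₙ` of `C` is a discrete subset of `C`. -/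
theorem stmt2 (Fq : Type*) [Field Fq] [Fintype Fq] [DecidableEq (RatFunc Fq)]
    (C : Type*) [NormedField C] [CompleteSpace C] [IsAlgClosed C]
    [IsUltrametricDist C]
    (ι : RatFunc.CompletionAtInfty Fq →+* C)
    (hiso : ∀ x : RatFunc.CompletionAtInfty Fq, ‖ι x‖ = fqtInftyAbs Fq x)
    (n : ℕ) (w : Fin n → C) :
    letI : Module (RatFunc.CompletionAtInfty Fq) C := Module.compHom C ι
    letI : Module (Polynomial Fq) C :=
      Module.compHom C
        ((ι.comp (ratFuncToFqtInfty Fq)).comp (algebraMap (Polynomial Fq) (RatFunc Fq)))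
    (LinearIndependent (RatFunc.CompletionAtInfty Fq) w ↔
      (LinearIndependent (Polynomial Fq) w ∧
        DiscreteTopology (Submodule.span (Polynomial Fq) (Set.range w) : Set C))) := by
  letI instF : Module (RatFunc.CompletionAtInfty Fq) C := Module.compHom C ι
  letI instP : Module (Polynomial Fq) C :=
    Module.compHom C
      ((ι.comp (ratFuncToFqtInfty Fq)).comp (algebraMap (Polynomial Fq) (RatFunc Fq)))
  classical
  letI nnf : NontriviallyNormedField (RatFunc.CompletionAtInfty Fq) := FqtAux.nnfF Fq
  haveI : @CompleteSpace (RatFunc.CompletionAtInfty Fq) PseudoMetricSpace.toUniformSpace :=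
    FqtAux.completeF Fq
  have hsmulP : ∀ (p : Polynomial Fq) (x : C), p • x = (polyToF Fq p) • x := fun _ _ => rfl
  have hsmulF : ∀ (a : RatFunc.CompletionAtInfty Fq) (x : C), a • x = ι a * x := fun _ _ => rfl
  have hnormF : ∀ a : RatFunc.CompletionAtInfty Fq, ‖a‖ = fqtInftyAbs Fq a := fun a => FqtAux.norm_eq_abs Fq a
  have hnorm_smul : ∀ (a : RatFunc.CompletionAtInfty Fq) (x : C), ‖a • x‖ = fqtInftyAbs Fq a * ‖x‖ := by
    intro a x; rw [hsmulF, norm_mul, hiso]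
  letI : NormedSpace (RatFunc.CompletionAtInfty Fq) C :=
    { instF with norm_smul_le := fun a x => le_of_eq (by rw [hnorm_smul, hnormF]) }
  let φ : (Fin n → RatFunc.CompletionAtInfty Fq) →ₗ[RatFunc.CompletionAtInfty Fq] C :=
    { toFun := fun a => ∑ i, a i • w i
      map_add' := fun a b => by
        simp only [Pi.add_apply, add_smul, Finset.sum_add_distrib]
      map_smul' := fun c a => by
        simp only [Pi.smul_apply, smul_eq_mul, mul_smul, RingHom.id_apply, ← Finset.smul_sum] }
  have hφ : ∀ a : Fin n → RatFunc.CompletionAtInfty Fq, φ a = ∑ i, a i • w i := fun _ => rfl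
  constructor
  · -- (i) → (ii)
    intro hLI
    have hLIP : LinearIndependent (Polynomial Fq) w := by
      rw [Fintype.linearIndependent_iff] at hLI ⊢
      intro g hg i
      have hg' : ∑ i, (polyToF Fq (g i)) • w i = 0 := by
        rw [← hg]
        exact Finset.sum_congr rfl fun i _ => (hsmulP (g i) (w i)).symm
      have := hLI (fun i => polyToF Fq (g i)) hg' i
      exact FqtAux.polyToF_inj Fq (by rw [this, map_zero])
    refine ⟨hLIP, ?_⟩
    have hker : LinearMap.ker φ = ⊥ := by
      rw [LinearMap.ker_eq_bot']
      intro a ha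
      exact funext (Fintype.linearIndependent_iff.mp hLI a ha)
    obtain ⟨K, hK0, hK⟩ := φ.exists_antilipschitzWith hker
    set δ₀ : ℝ := (K : ℝ)⁻¹ with hδ₀
    have hδ₀pos : 0 < δ₀ := by positivity
    have hsep : ∀ z ∈ Submodule.span (Polynomial Fq) (Set.range w), z ≠ 0 → δ₀ ≤ ‖z‖ := by
      intro z hz hz0
      obtain ⟨c, hc⟩ := (Submodule.mem_span_range_iff_exists_fun _).mp hz
      set a : Fin n → RatFunc.CompletionAtInfty Fq := fun i => polyToF Fq (c i) with ha
      have hzφ : φ a = z := by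
        rw [← hc, hφ]
        exact Finset.sum_congr rfl fun i _ => (hsmulP (c i) (w i)).symm
      have ha0 : a ≠ 0 := by
        intro h
        exact hz0 (by rw [← hzφ, h, map_zero])
      obtain ⟨i, hi⟩ : ∃ i, a i ≠ 0 := by
        by_contra h
        push_neg at h
        exact ha0 (funext h)
      have hci : c i ≠ 0 := fun h => hi (by rw [ha]; simp [h])
      have h1 : (1 : ℝ) ≤ ‖a i‖ := by
        rw [hnormF]
        exact FqtAux.one_le_abs_polyToF Fq hci
      have h2 : ‖a i‖ ≤ ‖a‖ := norm_le_pi_norm a i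
      have h3 : ‖a‖ ≤ K * ‖z‖ := by
        have h4 := hK.le_mul_dist a 0
        calc ‖a‖ = dist a 0 := (dist_zero_right a).symm
          _ ≤ K * dist (φ a) (φ 0) := h4
          _ = K * ‖z‖ := by rw [φ.map_zero, dist_zero_right, hzφ]
      have h5 : (1 : ℝ) ≤ K * ‖z‖ := le_trans h1 (le_trans h2 h3)
      rw [hδ₀]
      rw [inv_le_iff_one_le_mul₀ (by exact_mod_cast hK0)]
      linarith
    rw [discreteTopology_subtype_iff]
    intro x hx
    rw [Filter.inf_principal_eq_bot]
    refine mem_nhdsWithin.mpr ⟨Metric.ball x δ₀, Metric.isOpen_ball, Metric.mem_ball_self hδ₀pos, ?_⟩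
    rintro y ⟨hyb, hyx⟩
    intro hyS
    have hsub : y - x ∈ Submodule.span (Polynomial Fq) (Set.range w) :=
      Submodule.sub_mem _ hyS hx
    have hne : y - x ≠ 0 := sub_ne_zero.mpr hyx
    have := hsep _ hsub hne
    rw [← dist_eq_norm] at this
    rw [Metric.mem_ball] at hyb
    linarith
  · -- (ii) → (i)
    rintro ⟨hLIP, hdisc⟩
    rw [Fintype.linearIndependent_iff]
    intro c hc
    by_contra hcn
    obtain ⟨j, hj⟩ := not_forall.mp hcn
    -- extract δ from discreteness
    have h0S : (0 : C) ∈ Submodule.span (Polynomial Fq) (Set.range w) := Submodule.zero_mem _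
    rw [discreteTopology_subtype_iff] at hdisc
    have hbot := hdisc 0 h0S
    rw [Filter.inf_principal_eq_bot] at hbot
    obtain ⟨U, hUopen, hU0, hUsub⟩ := mem_nhdsWithin.mp hbot
    obtain ⟨δ, hδpos, hball⟩ := Metric.isOpen_iff.mp hUopen 0 hU0
    have hδ : ∀ z ∈ Submodule.span (Polynomial Fq) (Set.range w), ‖z‖ < δ → z = 0 := by
      intro z hz hzn
      by_contra hz0
      refine hUsub ⟨hball ?_, hz0⟩ hz
      rw [Metric.mem_ball, dist_zero_right]
      exact hzn
    -- normalize the dependence relation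
    set d : Fin n → RatFunc.CompletionAtInfty Fq := fun i => (c j)⁻¹ * c i with hd
    have hdj : d j = 1 := inv_mul_cancel₀ hj
    have hcd : ∑ i, d i • w i = 0 := by
      have : ∑ i, d i • w i = (c j)⁻¹ • ∑ i, c i • w i := by
        rw [Finset.smul_sum]
        exact Finset.sum_congr rfl fun i _ => (mul_smul _ _ _)
      rw [this, hc, smul_zero]
    set τ : RatFunc.CompletionAtInfty Fq := polyToF Fq Polynomial.X with hτ
    have hτv : Valued.v τ = ((Multiplicative.ofAdd (1 : ℤ) : Multiplicative ℤ) : WithZero (Multiplicative ℤ)) := by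
      rw [hτ, FqtAux.val_polyToF Fq Polynomial.X_ne_zero, Polynomial.natDegree_X]
      norm_num
    have hτ0 : τ ≠ 0 := FqtAux.polyToF_ne_zero Fq Polynomial.X_ne_zero
    set M : ℝ := ∑ i, ‖w i‖ with hM
    have hMpos : 0 ≤ M := Finset.sum_nonneg fun i _ => norm_nonneg _
    -- choose N
    have hq1 : (1 : ℝ) < (Fintype.card Fq : ℝ) := by exact_mod_cast Fintype.one_lt_card
    obtain ⟨N, hN⟩ : ∃ N : ℕ, ((Fintype.card Fq : ℝ))⁻¹ ^ N < δ / (M + 1) := by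
      refine exists_pow_lt_of_lt_one (by positivity) ?_
      exact inv_lt_one_of_one_lt₀ hq1
    have hNlt : (Fintype.card Fq : ℝ) ^ (-(N : ℤ)) * (M + 1) < δ := by
      rw [zpow_neg, zpow_natCast, ← inv_pow]
      calc ((Fintype.card Fq : ℝ))⁻¹ ^ N * (M + 1) < δ / (M + 1) * (M + 1) := by
            apply mul_lt_mul_of_pos_right hN (by positivity)
        _ = δ := by field_simp
    -- decompositions of τ^k • dᵢ into polynomial part and small part
    have hPexists : ∀ (i : Fin n) (k : ℕ), ∃ p : Polynomial Fq,
        Valued.v (τ ^ k * d i - polyToF Fq p) < 1 := fun i k => FqtAux.decompF Fq _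
    choose P₀ hP₀ using hPexists
    set P : Fin n → ℕ → Polynomial Fq :=
      fun i k => if i = j then Polynomial.X ^ k else P₀ i k with hPdef
    have hPj : ∀ k, P j k = Polynomial.X ^ k := fun k => by simp [hPdef]
    set ε : Fin n → ℕ → RatFunc.CompletionAtInfty Fq :=
      fun i k => τ ^ k * d i - polyToF Fq (P i k) with hεdef
    have hεdef' : ∀ i k, ε i k = τ ^ k * d i - polyToF Fq (P i k) := fun i k => rfl
    have hεval : ∀ i k, Valued.v (ε i k) < 1 := by
      intro i k
      by_cases hij : i = j
      · subst hij
        have hz : ε i k = 0 := by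
          rw [hεdef' i k, hPj, hdj, mul_one, map_pow]
          exact sub_eq_zero_of_eq rfl
        rw [hz, Valuation.map_zero]
        exact zero_lt_one
      · have hP : P i k = P₀ i k := by simp [hPdef, hij]
        rw [hεdef' i k, hP]
        exact hP₀ i k
    -- the value of τ^N
    have hofAddN : ((Multiplicative.ofAdd (1 : ℤ)) ^ N : Multiplicative ℤ)
        = Multiplicative.ofAdd ((N : ℤ)) := by
      apply Multiplicative.toAdd.injective
      simp [toAdd_pow]
    have hvτN : Valued.v (τ ^ N)
        = ((Multiplicative.ofAdd ((N : ℤ)) : Multiplicative ℤ) : WithZero (Multiplicative ℤ)) := by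
      rw [map_pow, hτv, ← WithZero.coe_pow, hofAddN]
    have hone_le : (1 : WithZero (Multiplicative ℤ))
        ≤ ((Multiplicative.ofAdd ((N : ℤ)) : Multiplicative ℤ) : WithZero (Multiplicative ℤ)) := by
      rw [← WithZero.coe_one, WithZero.coe_le_coe, ← ofAdd_zero, Multiplicative.ofAdd_le]
      exact_mod_cast Nat.zero_le N
    -- second-level decomposition
    choose Q hQ using fun (i : Fin n) (k : ℕ) => FqtAux.decompF Fq (τ ^ N * ε i k)
    have hQdeg : ∀ i k, (Q i k).degree < (N : ℕ) := by
      intro i k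
      have h1 : Valued.v (τ ^ N * ε i k)
          < ((Multiplicative.ofAdd ((N : ℤ)) : Multiplicative ℤ) : WithZero (Multiplicative ℤ)) := by
        rw [map_mul, hvτN]
        have := mul_lt_mul_of_pos_left (hεval i k)
          (zero_lt_iff.mpr (WithZero.coe_ne_zero (a := (Multiplicative.ofAdd ((N : ℤ)) : Multiplicative ℤ))))
        simpa using this
      have h2 : Valued.v (polyToF Fq (Q i k))
          < ((Multiplicative.ofAdd ((N : ℤ)) : Multiplicative ℤ) : WithZero (Multiplicative ℤ)) := by
        have heq : polyToF Fq (Q i k) = τ ^ N * ε i k - (τ ^ N * ε i k - polyToF Fq (Q i k)) := by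
          ring
        rw [heq]
        refine lt_of_le_of_lt (Valuation.map_sub _ _ _) ?_
        exact max_lt h1 (lt_of_lt_of_le (hQ i k) hone_le)
      by_cases hQ0 : Q i k = 0
      · rw [hQ0, Polynomial.degree_zero]
        exact_mod_cast WithBot.bot_lt_coe (N : ℕ)
      · rw [FqtAux.val_polyToF Fq hQ0, WithZero.coe_lt_coe, Multiplicative.ofAdd_lt] at h2
        rw [Polynomial.degree_eq_natDegree hQ0]
        have : (Q i k).natDegree < N := by exact_mod_cast h2
        exact_mod_cast WithBot.coe_lt_coe.mpr this
    -- pigeonhole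
    haveI : Finite {p : Polynomial Fq // p.degree < (N : ℕ)} := FqtAux.finite_degLT Fq N
    obtain ⟨k, l, hkl, hQkl⟩ := Finite.exists_ne_map_eq_of_infinite
      (fun k : ℕ => fun i : Fin n =>
        (⟨Q i k, hQdeg i k⟩ : {p : Polynomial Fq // p.degree < (N : ℕ)}))
    have hQeq : ∀ i, Q i k = Q i l := fun i => congrArg Subtype.val (congrFun hQkl i)
    -- the lattice points
    set Xp : ℕ → C := fun m => ∑ i, P i m • w i with hXp
    have hXmem : ∀ m, Xp m ∈ Submodule.span (Polynomial Fq) (Set.range w) := fun m =>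
      Submodule.sum_mem _ fun i _ => Submodule.smul_mem _ _ (Submodule.subset_span ⟨i, rfl⟩)
    have hXne : Xp k ≠ Xp l := by
      intro h
      have hsum : ∑ i, (P i k - P i l) • w i = 0 := by
        have : ∑ i, (P i k - P i l) • w i = Xp k - Xp l := by
          rw [hXp, ← Finset.sum_sub_distrib]
          exact Finset.sum_congr rfl fun i _ => sub_smul _ _ _
        rw [this, h, sub_self]
      have hzero := Fintype.linearIndependent_iff.mp hLIP (fun i => P i k - P i l) hsum j
      have hXkl : (Polynomial.X : Polynomial Fq) ^ k = Polynomial.X ^ l := by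
        have := sub_eq_zero.mp hzero
        rwa [hPj, hPj] at this
      have : k = l := by
        have h2 := congrArg Polynomial.natDegree hXkl
        simpa [Polynomial.natDegree_X_pow] using h2
      exact hkl this
    -- key identity
    have hXid : ∀ m, Xp m = -∑ i, ε i m • w i := by
      intro m
      have h1 : ∀ i : Fin n, polyToF Fq (P i m) = τ ^ m * d i - ε i m := by
        intro i; rw [hεdef' i m]; ring
      calc Xp m = ∑ i, (polyToF Fq (P i m)) • w i :=
            Finset.sum_congr rfl fun i _ => hsmulP _ _
        _ = ∑ i, ((τ ^ m * d i) • w i - (ε i m) • w i) := by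
            refine Finset.sum_congr rfl fun i _ => ?_
            rw [h1 i, sub_smul]
        _ = ∑ i, (τ ^ m) • (d i • w i) - ∑ i, (ε i m) • w i := by
            rw [Finset.sum_sub_distrib]
            congr 1
            exact Finset.sum_congr rfl fun i _ => mul_smul _ _ _
        _ = -∑ i, (ε i m) • w i := by
            rw [← Finset.smul_sum, hcd, smul_zero, zero_sub]
    have hdiff : Xp k - Xp l = ∑ i, (ε i l - ε i k) • w i := by
      rw [hXid k, hXid l, neg_sub_neg, ← Finset.sum_sub_distrib]
      exact Finset.sum_congr rfl fun i _ => (sub_smul _ _ _).symm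
    -- valuation bound on the differences
    have hεbound : ∀ i, Valued.v (ε i l - ε i k)
        < ((Multiplicative.ofAdd (-(N : ℤ)) : Multiplicative ℤ) : WithZero (Multiplicative ℤ)) := by
      intro i
      have h2 := hQ i k
      rw [hQeq i] at h2
      have hζ : Valued.v ((τ ^ N * ε i l - polyToF Fq (Q i l))
          - (τ ^ N * ε i k - polyToF Fq (Q i l))) < 1 :=
        lt_of_le_of_lt (Valuation.map_sub _ _ _) (max_lt (hQ i l) h2)
      have hrewrite : ε i l - ε i k = (τ ^ N)⁻¹ * ((τ ^ N * ε i l - polyToF Fq (Q i l))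
          - (τ ^ N * ε i k - polyToF Fq (Q i l))) := by
        rw [sub_sub_sub_cancel_right, ← mul_sub, inv_mul_cancel_left₀ (pow_ne_zero _ hτ0)]
      rw [hrewrite, map_mul, map_inv₀, hvτN, ← WithZero.coe_inv, ← ofAdd_neg]
      have := mul_lt_mul_of_pos_left hζ
        (zero_lt_iff.mpr (WithZero.coe_ne_zero (a := (Multiplicative.ofAdd (-(N : ℤ)) : Multiplicative ℤ))))
      simpa using this
    -- norm bound
    have hnormb : ‖Xp k - Xp l‖ < δ := by
      rw [hdiff]
      calc ‖∑ i, (ε i l - ε i k) • w i‖ ≤ ∑ i, ‖(ε i l - ε i k) • w i‖ := norm_sum_le _ _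
        _ ≤ ∑ i, (Fintype.card Fq : ℝ) ^ (-(N : ℤ)) * ‖w i‖ := by
            refine Finset.sum_le_sum fun i _ => ?_
            rw [hnorm_smul]
            exact mul_le_mul_of_nonneg_right
              (le_of_lt (FqtAux.abs_lt_of_val_lt Fq (hεbound i))) (norm_nonneg _)
        _ = (Fintype.card Fq : ℝ) ^ (-(N : ℤ)) * M := by rw [← Finset.mul_sum]
        _ < δ := by
            refine lt_of_le_of_lt ?_ hNlt
            have hpos : (0 : ℝ) < (Fintype.card Fq : ℝ) ^ (-(N : ℤ)) := by positivity
            nlinarith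
    have hXmem2 : Xp k - Xp l ∈ Submodule.span (Polynomial Fq) (Set.range w) :=
      Submodule.sub_mem _ (hXmem k) (hXmem l)
    exact hXne (sub_eq_zero.mp (hδ _ hXmem2 hnormb))
end

section
/- Let R be a discrete valuation ring with fraction field K and let n ≥ 1. Let Λ be a left Matrix(n, n, R)-submodule of Matrix(n, n, K) that is finitely generated as an R-module and spans Matrix(n, n, K) over K. Then there exists an invertible matrix g ∈ GL(n, K) such that Λ = Matrix(n, n, R)·g, the set of all products x·g with x ∈ Matrix(n, n, R). In particular Λ is a free left Matrix(n, n, R)-module of rank one. -/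
/-- **Full lattices over the maximal order `M(n, R)` in `M(n, K)` are free of rank one.**
Let `R` be a discrete valuation ring with fraction field `K` and `n ≥ 1`.  Let `Λ` be a
left `Matrix (Fin n) (Fin n) R`-submodule of `Matrix (Fin n) (Fin n) K` (encoded as an
`R`-submodule closed under left multiplication by matrices with entries in `R`) which is
finitely generated as an `R`-module and spans `Matrix (Fin n) (Fin n) K` over `K`.  Then
there is an invertible matrix `g ∈ GL(n, K)` with `Λ = Matrix (Fin n) (Fin n) R · g`. -/
theorem stmt3 (R : Type*) [CommRing R] [IsDomain R] [IsDiscreteValuationRing R]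
    (K : Type*) [Field K] [Algebra R K] [IsFractionRing R K]
    (n : ℕ) (hn : 1 ≤ n)
    (Λ : Submodule R (Matrix (Fin n) (Fin n) K))
    (hmul : ∀ (a : Matrix (Fin n) (Fin n) R), ∀ x ∈ Λ,
      a.map (algebraMap R K) * x ∈ Λ)
    (hfg : Λ.FG)
    (hfull : Submodule.span K (Λ : Set (Matrix (Fin n) (Fin n) K)) = ⊤) :
    ∃ g : GL (Fin n) K,
      (Λ : Set (Matrix (Fin n) (Fin n) K)) =
        Set.range (fun a : Matrix (Fin n) (Fin n) R =>
          a.map (algebraMap R K) * (g : Matrix (Fin n) (Fin n) K)) := by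
  classical
  set φ := algebraMap R K with hφ
  have hφinj : Function.Injective φ := IsFractionRing.injective R K
  set i0 : Fin n := ⟨0, hn⟩ with hi0
  -- the row-`i0` projection, as an `R`-linear map and as a `K`-linear map
  set π : Matrix (Fin n) (Fin n) K →ₗ[R] (Fin n → K) :=
    { toFun := fun x => x i0
      map_add' := fun _ _ => rfl
      map_smul' := fun _ _ => rfl } with hπ
  set πK : Matrix (Fin n) (Fin n) K →ₗ[K] (Fin n → K) :=
    { toFun := fun x => x i0
      map_add' := fun _ _ => rfl
      map_smul' := fun _ _ => rfl } with hπK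
  set W : Submodule R (Fin n → K) := Λ.map π with hW
  have hWfg : W.FG := hfg.map π
  -- `W` spans `K^n` over `K`
  have hπKsurj : Function.Surjective πK := by
    intro v; exact ⟨Matrix.of (fun _ j => v j), rfl⟩
  have hWspan : Submodule.span K (W : Set (Fin n → K)) = ⊤ := by
    have hset : (W : Set (Fin n → K)) = πK '' (Λ : Set _) := by
      simp [hW, Submodule.map_coe]; rfl
    rw [hset, ← Submodule.map_span, hfull, Submodule.map_top,
      LinearMap.range_eq_top.mpr hπKsurj]
  -- common denominator
  obtain ⟨S, hS⟩ := hWfg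
  obtain ⟨d, hd⟩ := IsLocalization.exist_integer_multiples (nonZeroDivisors R)
    (S ×ˢ (Finset.univ : Finset (Fin n))) (fun p => p.1 p.2)
  set dK : K := φ d with hdK
  have hdK0 : dK ≠ 0 := by
    simpa [hdK] using
      (map_ne_zero_iff φ hφinj).mpr (nonZeroDivisors.coe_ne_zero d)
  -- coordinatewise inclusion `R^n → K^n`
  set f : (Fin n → R) →ₗ[R] (Fin n → K) := (Algebra.linearMap R K).compLeft (Fin n) with hf
  have hfinj : Function.Injective f := fun x y h =>
    funext fun j => hφinj (congrFun h j)
  -- scaling by `dK` as an `R`-linear equivalence of `K^n`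
  set μ : (Fin n → K) ≃ₗ[R] (Fin n → K) :=
    { toFun := fun v => dK • v
      invFun := fun v => dK⁻¹ • v
      map_add' := fun _ _ => smul_add _ _ _
      map_smul' := fun r v => smul_comm dK r v
      left_inv := fun v => by simp [inv_smul_smul₀ hdK0]
      right_inv := fun v => by simp [smul_inv_smul₀ hdK0] } with hμ
  have hμa : ∀ x : Fin n → K, μ x = dK • x := fun _ => rfl
  have hμs : ∀ x : Fin n → K, μ.symm x = dK⁻¹ • x := fun _ => rfl
  set dW : Submodule R (Fin n → K) := W.map (μ : (Fin n → K) →ₗ[R] (Fin n → K)) with hdW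
  -- `dW` consists of integral vectors
  have hsub : dW ≤ LinearMap.range f := by
    rw [hdW, ← hS, Submodule.map_span, Submodule.span_le]
    rintro _ ⟨w, hwS, rfl⟩
    have : ∀ j : Fin n, ∃ r : R, φ r = dK * w j := by
      intro j
      obtain ⟨r, hr⟩ := hd (w, j) (Finset.mem_product.mpr ⟨hwS, Finset.mem_univ j⟩)
      exact ⟨r, by simpa [Algebra.smul_def] using hr⟩
    choose r hr using this
    exact ⟨r, funext fun j => by
      simpa [hf, LinearMap.compLeft_apply, hμa] using (hr j)⟩
  set N : Submodule R (Fin n → R) := dW.comap f with hN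
  have hmap : N.map f = dW := by
    rw [hN, Submodule.map_comap_eq, inf_eq_right.mpr hsub]
  -- a basis of `N` over the PID `R`
  obtain ⟨m, b⟩ := Submodule.basisOfPid (Pi.basisFun R (Fin n)) N
  set v : Fin m → (Fin n → K) := fun i => f (b i) with hv
  have hvR : LinearIndependent R v := by
    have h1 : LinearIndependent R (fun i => (b i : Fin n → R)) :=
      b.linearIndependent.map' N.subtype N.ker_subtype
    exact h1.map' f (LinearMap.ker_eq_bot.mpr hfinj)
  have hvK : LinearIndependent K v := (LinearIndependent.iff_fractionRing R K).mp hvR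
  -- the `R`-span of `v` is `dW`
  have hvspanR : Submodule.span R (Set.range v) = dW := by
    have hr : Set.range v = (f ∘ₗ N.subtype) '' Set.range b := by
      rw [← Set.range_comp]; rfl
    rw [hr, ← Submodule.map_span, b.span_eq, Submodule.map_top, LinearMap.range_comp,
      Submodule.range_subtype, hmap]
  -- `dW` spans `K^n` over `K`, hence so does `v`
  have hdWspan : Submodule.span K (dW : Set (Fin n → K)) = ⊤ := by
    rw [eq_top_iff, ← hWspan, Submodule.span_le]
    intro y hy
    have h1 : dK • y ∈ (dW : Set (Fin n → K)) := Submodule.mem_map_of_mem hy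
    have h2 : dK • y ∈ Submodule.span K (dW : Set (Fin n → K)) :=
      Submodule.subset_span h1
    have := Submodule.smul_mem (Submodule.span K (dW : Set (Fin n → K))) dK⁻¹ h2
    simpa [inv_smul_smul₀ hdK0] using this
  have hvspan : Submodule.span K (Set.range v) = ⊤ := by
    rw [eq_top_iff, ← hdWspan, Submodule.span_le, ← hvspanR]
    exact Submodule.span_subset_span R K _
  -- hence `v` is a `K`-basis, so `m = n`
  set bK : Module.Basis (Fin m) K (Fin n → K) := Module.Basis.mk hvK (by rw [hvspan]) with hbK
  have hmn : m = n := by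
    have h1 := Module.finrank_eq_card_basis bK
    rw [Module.finrank_pi] at h1
    simpa using h1.symm
  -- rescale by `dK⁻¹` to get the basis of `W`
  set bg : Module.Basis (Fin n) K (Fin n → K) :=
    (bK.reindex (finCongr hmn)).isUnitSMul
      (fun _ => isUnit_iff_ne_zero.mpr (inv_ne_zero hdK0)) with hbg
  have hbgi : ∀ i, bg i = dK⁻¹ • v (Fin.cast hmn.symm i) := by
    intro i
    rw [hbg, Module.Basis.isUnitSMul_apply, Module.Basis.reindex_apply, hbK, Module.Basis.mk_apply]
    rfl
  -- `W` is the `R`-span of `bg`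
  have hWspanbg : W = Submodule.span R (Set.range (bg : Fin n → (Fin n → K))) := by
    have h1 : Set.range (bg : Fin n → (Fin n → K)) =
        (μ.symm : (Fin n → K) →ₗ[R] (Fin n → K)) '' Set.range v := by
      ext x
      constructor
      · rintro ⟨i, rfl⟩
        exact ⟨v (Fin.cast hmn.symm i), ⟨_, rfl⟩, (hbgi i).symm⟩
      · rintro ⟨_, ⟨i, rfl⟩, rfl⟩
        exact ⟨Fin.cast hmn i, by rw [hbgi]; rfl⟩
    rw [h1, ← Submodule.map_span, hvspanR, hdW, ← Submodule.map_comp]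
    have h2 : (μ.symm : (Fin n → K) →ₗ[R] (Fin n → K)) ∘ₗ
        (μ : (Fin n → K) →ₗ[R] (Fin n → K)) = LinearMap.id := by
      refine LinearMap.ext fun x => ?_
      exact μ.symm_apply_apply x
    rw [h2, Submodule.map_id]
  -- the matrix whose rows are `bg`
  set g0 : Matrix (Fin n) (Fin n) K := Matrix.of (fun i j => bg i j) with hg0
  have hg0unit : IsUnit g0 := by
    have h1 : Invertible ((Pi.basisFun K (Fin n)).toMatrix bg) :=
      (Pi.basisFun K (Fin n)).invertibleToMatrix bg
    have h2 : g0 = ((Pi.basisFun K (Fin n)).toMatrix bg).transpose := by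
      ext i j
      simp [hg0, Matrix.transpose_apply, Module.Basis.toMatrix_apply, Pi.basisFun_repr]
    rw [h2]
    exact isUnit_of_invertible _
  set g : GL (Fin n) K := hg0unit.unit with hg
  have hgcoe : (g : Matrix (Fin n) (Fin n) K) = g0 := hg0unit.unit_spec
  refine ⟨g, ?_⟩
  rw [hgcoe]
  -- rows of `g0` lie in `W`, hence `g0 ∈ Λ`
  have hrowW : ∀ i, bg i ∈ W := by
    intro i
    rw [hWspanbg]
    exact Submodule.subset_span ⟨i, rfl⟩
  have hg0Λ : g0 ∈ Λ := by
    have hy : ∀ i : Fin n, ∃ y ∈ Λ, π y = bg i := by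
      intro i
      obtain ⟨y, hyΛ, hyπ⟩ := hrowW i
      exact ⟨y, hyΛ, hyπ⟩
    choose y hyΛ hyπ using hy
    have hsum : (∑ i : Fin n, (Matrix.single i i0 (1 : R)).map φ * y i) = g0 := by
      ext i k
      rw [Matrix.sum_apply]
      have hterm : ∀ j : Fin n,
          ((Matrix.single j i0 (1 : R)).map φ * y j) i k =
            if i = j then y j i0 k else 0 := by
        intro j
        rw [Matrix.mul_apply]
        by_cases hij : i = j
        · subst hij
          rw [Finset.sum_eq_single i0]
          · simp [Matrix.single, Matrix.map_apply]
          · intro l _ hl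
            simp only [Matrix.map_apply, Matrix.single, Matrix.of_apply]
            rw [if_neg (by simp [Ne.symm hl]), map_zero, zero_mul]
          · simp
        · rw [if_neg hij]
          apply Finset.sum_eq_zero
          intro l _
          simp only [Matrix.map_apply, Matrix.single, Matrix.of_apply]
          rw [if_neg (fun h => hij h.1.symm), map_zero, zero_mul]
      rw [Finset.sum_congr rfl (fun j _ => hterm j), Finset.sum_ite_eq (Finset.univ) i
        (fun j => y j i0 k)]
      have : y i i0 k = bg i k := by
        have := hyπ i
        exact congrFun this k
      simp [this, hg0]
    rw [← hsum]
    exact Submodule.sum_mem Λ (fun i _ => hmul _ _ (hyΛ i))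
  -- conclude
  ext x
  constructor
  · -- `Λ ⊆ M(n,R) · g0`
    intro hx
    have hrow : ∀ i : Fin n, x i ∈ W := by
      intro i
      refine ⟨(Matrix.single i0 i (1 : R)).map φ * x, hmul _ _ hx, ?_⟩
      funext k
      show ((Matrix.single i0 i (1 : R)).map φ * x) i0 k = x i k
      rw [Matrix.mul_apply]
      rw [Finset.sum_eq_single i]
      · simp [Matrix.single, Matrix.map_apply]
      · intro l _ hl
        simp only [Matrix.map_apply, Matrix.single, Matrix.of_apply]
        rw [if_neg (fun h => hl h.2.symm), map_zero, zero_mul]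
      · simp
    have hcoef : ∀ i : Fin n, ∃ c : Fin n → R, (∑ j, c j • bg j) = x i := by
      intro i
      have := hrow i
      rw [hWspanbg] at this
      exact (Submodule.mem_span_range_iff_exists_fun R).mp this
    choose c hc using hcoef
    refine ⟨Matrix.of (fun i j => c i j), ?_⟩
    ext i k
    show (((Matrix.of fun i j => c i j) : Matrix (Fin n) (Fin n) R).map φ * g0) i k = x i k
    rw [Matrix.mul_apply]
    have : ∀ j, ((Matrix.of fun i j => c i j : Matrix (Fin n) (Fin n) R).map φ) i j * g0 j k
        = c i j • bg j k := by
      intro j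
      simp [Matrix.map_apply, Algebra.smul_def, hg0, hφ]
    rw [Finset.sum_congr rfl (fun j _ => this j)]
    have := congrFun (hc i) k
    simpa using this
  · -- `M(n,R) · g0 ⊆ Λ`
    rintro ⟨a, rfl⟩
    exact hmul a g0 hg0Λ
end
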